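/- For each i ≥ 1, the sequent (1/1)^{i-1} (1/q) q (1\1)^i ⇒ 1 is provable in L*₁, and the type A_i (defined by A_0 = q, A_{k+1} = (1/A_k)\1) is an interpolant for this sequent with respect to the partition splitting the antecedent as ((1/1)^{i-1} (1/q) ; q (1\1)^i): both q (1\1)^i ⇒ A_i and (1/1)^{i-1} (1/q) A_i ⇒ 1 are provable in L*₁. -/

import Mathlib

/-- Types of the associative Lambek calculus with unit. -/
inductive LTy where
  | prim : ℕ → LTy
  | one  : LTy
  | ldiv : LTy → LTy → LTy   -- ldiv A B = A \ B
  | rdiv : LTy → LTy → LTy   -- rdiv B A = B / A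
  | mul  : LTy → LTy → LTy
deriving DecidableEq

/-- L*₁ : the associative Lambek calculus allowing empty antecedents, with unit. -/
inductive LProv : List LTy → LTy → Prop where
  | id (p) : LProv [.prim p] (.prim p)
  | ldivL (G D1 D2 : List LTy) (A B C) :
      LProv G A → LProv (D1 ++ B :: D2) C →
      LProv (D1 ++ G ++ LTy.ldiv A B :: D2) C
  | ldivR (Pi : List LTy) (A B) :
      LProv (A :: Pi) B → LProv Pi (.ldiv A B)
  | rdivL (G D1 D2 : List LTy) (A B C) :
      LProv G A → LProv (D1 ++ B :: D2) C →
      LProv (D1 ++ LTy.rdiv B A :: (G ++ D2)) C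
  | rdivR (Pi : List LTy) (A B) :
      LProv (Pi ++ [A]) B → LProv Pi (.rdiv B A)
  | mulL (D1 D2 : List LTy) (A B C) :
      LProv (D1 ++ A :: B :: D2) C → LProv (D1 ++ LTy.mul A B :: D2) C
  | mulR (G D : List LTy) (A B) :
      LProv G A → LProv D B → LProv (G ++ D) (.mul A B)
  | oneL (D1 D2 : List LTy) (C) :
      LProv (D1 ++ D2) C → LProv (D1 ++ LTy.one :: D2) C
  | oneR : LProv [] .one
  | cut (G D1 D2 : List LTy) (A C) :
      LProv G A → LProv (D1 ++ A :: D2) C → LProv (D1 ++ G ++ D2) C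

/-- Length of a type, with `‖1‖ = 0`. -/
def lenL : LTy → ℕ
  | .prim _ => 1
  | .one => 0
  | .ldiv A B => lenL A + lenL B
  | .rdiv B A => lenL B + lenL A
  | .mul A B => lenL A + lenL B

/-- `Aseq 0 = q`, `Aseq (i+1) = (1/Aseq i)\1`, where `q` is the primitive type `prim 0`. -/
def Aseq : ℕ → LTy
  | 0 => .prim 0
  | i + 1 => .ldiv (.rdiv .one (Aseq i)) .one

lemma one_seq : LProv [LTy.one] .one := LProv.oneL [] [] _ LProv.oneR

lemma ldiv11 (D1 D2 : List LTy) (C : LTy) (h : LProv (D1 ++ D2) C) :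
    LProv (D1 ++ LTy.ldiv .one .one :: D2) C := by
  have := LProv.ldivL [] D1 D2 .one .one C LProv.oneR (LProv.oneL D1 D2 C h)
  simpa using this

lemma rdiv11 (D1 D2 : List LTy) (C : LTy) (h : LProv (D1 ++ D2) C) :
    LProv (D1 ++ LTy.rdiv .one .one :: D2) C := by
  have := LProv.rdivL [] D1 D2 .one .one C LProv.oneR (LProv.oneL D1 D2 C h)
  simpa using this

lemma Bpart (j : ℕ) :
    LProv (LTy.prim 0 :: List.replicate (j + 1) (LTy.ldiv .one .one)) (Aseq (j + 1)) := by
  induction j with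
  | zero =>
      apply LProv.ldivR
      have h1 : LProv ([LTy.one] ++ [LTy.ldiv .one .one]) .one :=
        ldiv11 [LTy.one] [] _ one_seq
      have := LProv.rdivL [LTy.prim 0] [] [LTy.ldiv .one .one] (.prim 0) .one .one
        (LProv.id 0) h1
      simpa [Aseq] using this
  | succ j ih =>
      apply LProv.ldivR
      have h1 : LProv ([LTy.one] ++ [LTy.ldiv .one .one]) .one :=
        ldiv11 [LTy.one] [] _ one_seq
      have := LProv.rdivL (LTy.prim 0 :: List.replicate (j + 1) (LTy.ldiv .one .one))
        [] [LTy.ldiv .one .one] (Aseq (j + 1)) .one .one ih h1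
      have h2 : List.replicate (j + 2) (LTy.ldiv LTy.one LTy.one)
          = List.replicate (j + 1) (LTy.ldiv LTy.one LTy.one) ++ [LTy.ldiv .one .one] :=
        List.replicate_succ'
      simpa [Aseq, h2] using this

lemma base_seq : LProv [LTy.rdiv .one (.prim 0), LTy.prim 0] .one := by
  have := LProv.rdivL [LTy.prim 0] [] [] (.prim 0) .one .one (LProv.id 0) one_seq
  simpa using this

lemma Cpart (j : ℕ) :
    LProv (List.replicate j (LTy.rdiv .one .one) ++
      [LTy.rdiv .one (.prim 0), Aseq (j + 1)]) .one := by
  induction j with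
  | zero =>
      have hr : LProv [LTy.rdiv .one (.prim 0)] (.rdiv .one (.prim 0)) :=
        LProv.rdivR [LTy.rdiv .one (.prim 0)] (.prim 0) .one base_seq
      have := LProv.ldivL [LTy.rdiv .one (.prim 0)] [] [] (.rdiv .one (.prim 0)) .one .one
        hr one_seq
      simpa [Aseq] using this
  | succ j ih =>
      have h1 : LProv (List.replicate (j + 1) (LTy.rdiv .one .one) ++
          [LTy.rdiv .one (.prim 0), Aseq (j + 1)]) .one := by
        have := rdiv11 [] (List.replicate j (LTy.rdiv .one .one) ++
          [LTy.rdiv .one (.prim 0), Aseq (j + 1)]) .one (by simpa using ih)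
        simpa [List.replicate_succ] using this
      have hr : LProv (List.replicate (j + 1) (LTy.rdiv .one .one) ++
          [LTy.rdiv .one (.prim 0)]) (.rdiv .one (Aseq (j + 1))) := by
        apply LProv.rdivR
        simpa using h1
      have := LProv.ldivL (List.replicate (j + 1) (LTy.rdiv .one .one) ++
          [LTy.rdiv .one (.prim 0)]) [] [] (.rdiv .one (Aseq (j + 1))) .one .one hr one_seq
      simpa [Aseq] using this

/-- For each `i ≥ 1`, the sequent `(1/1)^{i-1} (1/q) q (1\1)^i ⇒ 1` is provable in L*₁,
and `A_i` is an interpolant for the partition `((1/1)^{i-1} (1/q) ; q (1\1)^i)`: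
both `q (1\1)^i ⇒ A_i` and `(1/1)^{i-1} (1/q) A_i ⇒ 1` are provable. -/
theorem Aseq_interpolant (i : ℕ) (hi : 1 ≤ i) :
    LProv (List.replicate (i - 1) (LTy.rdiv .one .one) ++
           [LTy.rdiv .one (.prim 0), LTy.prim 0] ++
           List.replicate i (LTy.ldiv .one .one)) .one ∧
    LProv (LTy.prim 0 :: List.replicate i (LTy.ldiv .one .one)) (Aseq i) ∧
    LProv (List.replicate (i - 1) (LTy.rdiv .one .one) ++
           [LTy.rdiv .one (.prim 0), Aseq i]) .one := by
  obtain ⟨j, rfl⟩ : ∃ j, i = j + 1 := ⟨i - 1, (Nat.succ_pred_eq_of_pos hi).symm⟩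
  have hB := Bpart j
  have hC := Cpart j
  refine ⟨?_, by simpa using hB, by simpa using hC⟩
  have := LProv.cut (LTy.prim 0 :: List.replicate (j + 1) (LTy.ldiv .one .one))
    (List.replicate j (LTy.rdiv .one .one) ++ [LTy.rdiv .one (.prim 0)]) []
    (Aseq (j + 1)) .one hB (by simpa using hC)
  simpa using this
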